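/- (formula (37)) Let Ω be a real n×n matrix and let K = [[0, I_n],[−Ω, 0]] be the 2n×2n block matrix with zero diagonal blocks, I_n in the upper-right block and −Ω in the lower-left block. Then for every x ∈ ℝ, exp(x·K) = [[φ_0(x²·Ω), x·φ_1(x²·Ω)], [−x·Ω·φ_1(x²·Ω), φ_0(x²·Ω)]]. -/

import Mathlib

open Matrix

/-- `φ_i(W) = Σ_{l=0}^∞ ((−1)^l/(2l+i)!)·W^l`. -/
noncomputable def phiFun {n : ℕ} (i : ℕ) (W : Matrix (Fin n) (Fin n) ℝ) :
    Matrix (Fin n) (Fin n) ℝ :=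
  ∑' l : ℕ, (((-1 : ℝ) ^ l / (Nat.factorial (2 * l + i) : ℝ)) • W ^ l)

/-!
Since `(x • K)² = fromBlocks (-W) 0 0 (-W)` with `W = x² • Ω`, the even terms of the exponential
series of `x • K` are block diagonal with diagonal blocks `(-W)^l / (2l)!`, and the odd terms are
off-diagonal with blocks `x • (-W)^l / (2l+1)!` and `-x • Ω * (-W)^l / (2l+1)!`. Summing the even
and the odd terms separately gives the `φ₀` and `φ₁` series blockwise.
-/

open scoped Nat

theorem HasSum.matrix_fromBlocks {ι R l m n o : Type*} [AddCommMonoid R] [TopologicalSpace R]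
    {A : ι → Matrix n l R} {B : ι → Matrix n m R} {C : ι → Matrix o l R}
    {D : ι → Matrix o m R} {a : Matrix n l R} {b : Matrix n m R} {c : Matrix o l R}
    {d : Matrix o m R} (hA : HasSum A a) (hB : HasSum B b) (hC : HasSum C c)
    (hD : HasSum D d) :
    HasSum (fun k => fromBlocks (A k) (B k) (C k) (D k)) (fromBlocks a b c d) := by
  refine Pi.hasSum.2 fun i => Pi.hasSum.2 fun j => ?_
  rcases i with i | i <;> rcases j with j | j
  · exact Pi.hasSum.1 (Pi.hasSum.1 hA i) j
  · exact Pi.hasSum.1 (Pi.hasSum.1 hB i) j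
  · exact Pi.hasSum.1 (Pi.hasSum.1 hC i) j
  · exact Pi.hasSum.1 (Pi.hasSum.1 hD i) j

namespace Matrix

variable {m α : Type*} [Fintype m] [DecidableEq m] [Semiring α]

theorem fromBlocks_offDiagonal_pow_two_mul (A B : Matrix m m α) (l : ℕ) :
    fromBlocks 0 A B 0 ^ (2 * l) = fromBlocks ((A * B) ^ l) 0 0 ((B * A) ^ l) := by
  rw [pow_mul, sq, fromBlocks_multiply]
  simpa using fromBlocks_diagonal_pow (A * B) (B * A) l

theorem fromBlocks_offDiagonal_pow_two_mul_add_one (A B : Matrix m m α) (l : ℕ) :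
    fromBlocks 0 A B 0 ^ (2 * l + 1) =
      fromBlocks 0 (A * (B * A) ^ l) (B * (A * B) ^ l) 0 := by
  rw [pow_succ', fromBlocks_offDiagonal_pow_two_mul, fromBlocks_multiply]
  simp

end Matrix

section
open scoped Matrix.Norms.Operator

theorem hasSum_phiFun {n : ℕ} (i : ℕ) (W : Matrix (Fin n) (Fin n) ℝ) :
    HasSum (fun l : ℕ => ((-1 : ℝ) ^ l / ((2 * l + i)! : ℝ)) • W ^ l) (phiFun i W) := by
  refine Summable.hasSum <|
    .of_norm_bounded_eventually (Real.summable_pow_div_factorial ‖W‖) ?_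
  rw [Nat.cofinite_eq_atTop]
  filter_upwards [Filter.eventually_gt_atTop 0] with l hl
  have hfact : (l ! : ℝ) ≤ (2 * l + i)! := by exact_mod_cast Nat.factorial_le (by omega)
  rw [norm_smul, norm_div, norm_pow, norm_neg, norm_one, one_pow, Real.norm_natCast,
    one_div_mul_eq_div]
  exact div_le_div₀ (by positivity) (norm_pow_le' W hl) (by positivity) hfact

end

theorem inv_factorial_smul_neg_pow {n : ℕ} (i l : ℕ) (W : Matrix (Fin n) (Fin n) ℝ) :
    ((2 * l + i)! : ℝ)⁻¹ • (-W) ^ l = ((-1 : ℝ) ^ l / ((2 * l + i)! : ℝ)) • W ^ l := by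
  rw [← neg_one_smul ℝ W, smul_pow, smul_smul, div_eq_inv_mul]

theorem stmt_15 (n : ℕ) (Ω : Matrix (Fin n) (Fin n) ℝ)
    (K : Matrix (Fin n ⊕ Fin n) (Fin n ⊕ Fin n) ℝ)
    (hK : K = fromBlocks 0 1 (-Ω) 0) :
    ∀ x : ℝ, NormedSpace.exp (x • K) =
      fromBlocks (phiFun 0 (x ^ 2 • Ω)) (x • phiFun 1 (x ^ 2 • Ω))
        (-(x • (Ω * phiFun 1 (x ^ 2 • Ω)))) (phiFun 0 (x ^ 2 • Ω)) := by
  intro x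
  have hxK : x • K = fromBlocks 0 (x • 1) (-(x • Ω)) 0 := by
    rw [hK, fromBlocks_smul, smul_zero, smul_neg]
  have hAB : x • (1 : Matrix (Fin n) (Fin n) ℝ) * -(x • Ω) = -(x ^ 2 • Ω) := by
    rw [smul_one_mul, smul_neg, smul_smul, sq]
  have hBA : -(x • Ω) * x • (1 : Matrix (Fin n) (Fin n) ℝ) = -(x ^ 2 • Ω) := by
    rw [mul_smul_one, smul_neg, smul_smul, sq]
  set W := x ^ 2 • Ω
  have heven : HasSum (fun l => ((2 * l)! : ℝ)⁻¹ • (x • K) ^ (2 * l))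
      (fromBlocks (phiFun 0 W) 0 0 (phiFun 0 W)) := by
    convert (hasSum_phiFun 0 W).matrix_fromBlocks hasSum_zero hasSum_zero (hasSum_phiFun 0 W)
      using 2 with l
    rw [hxK, fromBlocks_offDiagonal_pow_two_mul, hAB, hBA, fromBlocks_smul, smul_zero,
      ← inv_factorial_smul_neg_pow 0 l W]
    rfl
  have hodd : HasSum (fun l => ((2 * l + 1)! : ℝ)⁻¹ • (x • K) ^ (2 * l + 1))
      (fromBlocks 0 (x • phiFun 1 W) (-(x • (Ω * phiFun 1 W))) 0) := by
    convert hasSum_zero.matrix_fromBlocks ((hasSum_phiFun 1 W).const_smul x)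
      (((hasSum_phiFun 1 W).mul_left Ω).const_smul x).neg hasSum_zero using 2 with l
    rw [hxK, fromBlocks_offDiagonal_pow_two_mul_add_one, hAB, hBA, fromBlocks_smul, smul_zero,
      ← inv_factorial_smul_neg_pow 1 l W, smul_one_mul, smul_comm, neg_mul, smul_mul_assoc,
      smul_neg, smul_comm _ x, mul_smul_comm]
  rw [congrFun (NormedSpace.exp_eq_tsum ℝ) (x • K),
    (heven.even_add_odd (f := fun k => (k ! : ℝ)⁻¹ • (x • K) ^ k) hodd).tsum_eq, fromBlocks_add]
  simp
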